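/- Let −1 < p ≤ −1/2 and let j_{p,1} be the first positive zero of J_p. With α = 1/(8(p+1)(p+3)), for all x ∈ (0, j_{p,1}) one has ((p+2)/(p+1) − αx²)·𝓙_{p+1}(x) < 1/(p+1) + 𝓙_p(x) − αx². -/

import Mathlib

open Real

noncomputable def besselJn (p x : ℝ) : ℝ :=
  ∑' n : ℕ, (-(1:ℝ)/4)^n * x^(2*n) / ((Real.Gamma (p+n+1) / Real.Gamma (p+1)) * n.factorial)

noncomputable def besselIn (p x : ℝ) : ℝ :=
  ∑' n : ℕ, ((1:ℝ)/4)^n * x^(2*n) / ((Real.Gamma (p+n+1) / Real.Gamma (p+1)) * n.factorial)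

noncomputable def besselJ (p x : ℝ) : ℝ :=
  ∑' n : ℕ, (-1:ℝ)^n * (x/2)^(p+2*n) / (n.factorial * Real.Gamma (p+n+1))

/-!
Write `c_n = 1 / ((p+1)_n n!)`, so that `𝓙_p(x) = ∑ (-1)ⁿ c_n yⁿ` with `y = x²/4`. Expanding the
difference of the two sides in powers of `y`, the terms of degree `0`, `1` and `2` cancel (this is
what fixes `α`), and what is left is an alternating series `∑ (-1)ᵐ u_m` with `u_m > 0`. For
`p ≤ -1/2` and `y ≤ 1` the `u_m` strictly decrease, so the sum is at least `u_0 - u_1 > 0`.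

The restriction `x ≤ 2` is harmless: the same alternating-series bound gives
`𝓙_p(2) ≤ 1 - 1/(p+1) + 1/(2(p+1)(p+2)) < 0`, so `J_p` vanishes somewhere in `(0, 2)` and
`j_{p,1} < 2`.
-/

open Polynomial Set Nat

theorem Real.Gamma_add_nat_eq_mul_ascPochhammer {z : ℝ} (hz : 0 < z) (n : ℕ) :
    Gamma (z + n) = Gamma z * (ascPochhammer ℝ n).eval z := by
  induction n with
  | zero => simp
  | succ n ih =>
    rw [Nat.cast_succ, ← add_assoc, Gamma_add_one (by positivity), ih, ascPochhammer_succ_eval]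
    ring

theorem pow_le_ascPochhammer_eval {S : Type*} [Semiring S] [PartialOrder S] [IsOrderedRing S]
    {s : S} (hs : 0 ≤ s) (n : ℕ) : s ^ n ≤ (ascPochhammer S n).eval s := by
  induction n with
  | zero => simp
  | succ n ih =>
    rw [pow_succ, ascPochhammer_succ_eval]
    exact mul_le_mul ih (le_add_of_nonneg_right n.cast_nonneg) hs ((pow_nonneg hs n).trans ih)

theorem HasSum.sub_le_of_antitone_alternating {E : Type*} [Ring E] [PartialOrder E]
    [IsOrderedRing E] [TopologicalSpace E] [OrderClosedTopology E] {f : ℕ → E} {l : E}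
    (h : HasSum (fun n ↦ (-1) ^ n * f n) l) (hf : Antitone f) : f 0 - f 1 ≤ l := by
  simpa [Finset.sum_range_succ, sub_eq_add_neg] using
    hf.alternating_series_le_tendsto h.tendsto_sum_nat 1

noncomputable def besselJnCoeff (p : ℝ) (n : ℕ) : ℝ :=
  ((ascPochhammer ℝ n).eval (p + 1) * n !)⁻¹

@[simp]
theorem besselJnCoeff_zero (p : ℝ) : besselJnCoeff p 0 = 1 := by
  simp [besselJnCoeff]

theorem besselJnCoeff_succ_right (p : ℝ) (n : ℕ) :
    besselJnCoeff p (n + 1) = besselJnCoeff p n / ((p + n + 1) * (n + 1)) := by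
  simp only [besselJnCoeff, ascPochhammer_succ_eval, factorial_succ, cast_mul, cast_succ]
  rw [div_eq_mul_inv, ← mul_inv]
  ring_nf

theorem besselJnCoeff_one (p : ℝ) : besselJnCoeff p 1 = (p + 1)⁻¹ := by
  simp [besselJnCoeff_succ_right p 0]

theorem besselJnCoeff_two (p : ℝ) : besselJnCoeff p 2 = (2 * (p + 1) * (p + 2))⁻¹ := by
  rw [besselJnCoeff_succ_right p 1, besselJnCoeff_one]
  field_simp
  ring

theorem besselJnCoeff_succ_left (p : ℝ) (n : ℕ) :
    besselJnCoeff p (n + 1) = besselJnCoeff (p + 1) n / ((p + 1) * (n + 1)) := by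
  simp only [besselJnCoeff, ascPochhammer_succ_left, eval_mul, eval_X, eval_comp, eval_add,
    eval_one, factorial_succ, cast_mul, cast_succ]
  rw [div_eq_mul_inv, ← mul_inv]
  ring_nf

theorem besselJnCoeff_pos {p : ℝ} (hp : -1 < p) (n : ℕ) : 0 < besselJnCoeff p n := by
  have := ascPochhammer_pos n (p + 1) (by linarith)
  unfold besselJnCoeff
  positivity

theorem besselJnCoeff_le {p : ℝ} (hp : -1 < p) (n : ℕ) :
    besselJnCoeff p n ≤ ((p + 1) ^ n * n !)⁻¹ := by
  unfold besselJnCoeff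
  gcongr
  · have := pow_pos (show 0 < p + 1 by linarith) n; positivity
  · exact pow_le_ascPochhammer_eval (by linarith) n

theorem summable_besselJnCoeff_mul_pow {p : ℝ} (hp : -1 < p) (y : ℝ) :
    Summable fun n ↦ besselJnCoeff p n * y ^ n := by
  refine .of_norm_bounded (Real.summable_pow_div_factorial (|y| / (p + 1))) fun n ↦ ?_
  rw [norm_mul, norm_pow, Real.norm_of_nonneg (besselJnCoeff_pos hp n).le, Real.norm_eq_abs,
    div_pow, div_div, div_eq_mul_inv, mul_comm]
  gcongr
  exact besselJnCoeff_le hp n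

theorem besselJn_summand_eq {p : ℝ} (hp : -1 < p) (x : ℝ) (n : ℕ) :
    (-(1:ℝ)/4)^n * x^(2*n) / ((Gamma (p+n+1) / Gamma (p+1)) * n !) =
      (-1) ^ n * (besselJnCoeff p n * (x ^ 2 / 4) ^ n) := by
  have hΓ : Gamma (p + 1) ≠ 0 := (Gamma_pos_of_pos (by linarith)).ne'
  rw [add_right_comm, Gamma_add_nat_eq_mul_ascPochhammer (by linarith), mul_div_cancel_left₀ _ hΓ,
    besselJnCoeff, pow_mul, div_pow, div_pow]
  field_simp

theorem hasSum_besselJn {p : ℝ} (hp : -1 < p) (x : ℝ) :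
    HasSum (fun n ↦ (-1) ^ n * (besselJnCoeff p n * (x ^ 2 / 4) ^ n)) (besselJn p x) := by
  have hs := (summable_besselJnCoeff_mul_pow hp (-(x ^ 2 / 4))).hasSum
  simp only [neg_pow (x ^ 2 / 4), mul_left_comm (besselJnCoeff p _)] at hs
  simpa only [besselJn, besselJn_summand_eq hp] using hs

theorem besselJ_eq_mul_besselJn {p : ℝ} (hp : -1 < p) {x : ℝ} (hx : 0 < x) :
    besselJ p x = (x / 2) ^ p / Gamma (p + 1) * besselJn p x := by
  rw [besselJ, (hasSum_besselJn hp x).tsum_eq.symm, ← tsum_mul_left]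
  congr 1 with n
  have hΓ : Gamma (p + 1) ≠ 0 := (Gamma_pos_of_pos (by linarith)).ne'
  rw [add_right_comm, Gamma_add_nat_eq_mul_ascPochhammer (by linarith), besselJnCoeff,
    rpow_add (by positivity), show (2 * n : ℝ) = ((2 * n : ℕ) : ℝ) by push_cast; ring,
    rpow_natCast, pow_mul, div_pow x 2 2]
  norm_num
  field_simp

theorem besselJn_zero {p : ℝ} (hp : -1 < p) : besselJn p 0 = 1 := by
  refine (hasSum_besselJn hp 0).unique ?_
  convert hasSum_ite_eq 0 (1 : ℝ) with n
  cases n <;> simp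

theorem continuous_besselJn {p : ℝ} (hp : -1 < p) : Continuous (besselJn p) := by
  refine continuous_iff_continuousAt.2 fun x₀ ↦ ?_
  set R := |x₀| + 1
  have hR : ContinuousOn (besselJn p) (Icc (-R) R) := by
    have h := continuousOn_tsum (s := Icc (-R) R)
      (f := fun n x ↦ (-1) ^ n * (besselJnCoeff p n * (x ^ 2 / 4) ^ n))
      (fun n ↦ by fun_prop) (summable_besselJnCoeff_mul_pow hp (R ^ 2 / 4)) fun n x hx ↦ by
        rw [norm_mul, norm_pow, norm_neg, norm_one, one_pow, one_mul, norm_mul, norm_pow,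
          Real.norm_of_nonneg (besselJnCoeff_pos hp n).le, Real.norm_of_nonneg (by positivity)]
        exact mul_le_mul_of_nonneg_left (pow_le_pow_left₀ (by positivity)
          (div_le_div_of_nonneg_right (sq_le_sq' hx.1 hx.2) (by norm_num)) n)
          (besselJnCoeff_pos hp n).le
    simpa only [fun x ↦ (hasSum_besselJn hp x).tsum_eq] using h
  exact hR.continuousAt (Icc_mem_nhds (by linarith [neg_abs_le x₀]) (by linarith [le_abs_self x₀]))

theorem besselJn_two_neg {p : ℝ} (hp1 : -1 < p) (hp2 : p ≤ -1/2) : besselJn p 2 < 0 := by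
  have hs : HasSum (fun n ↦ (-1) ^ n * besselJnCoeff p (n + 1)) (1 - besselJn p 2) := by
    have := ((hasSum_nat_add_iff' 1).2 (hasSum_besselJn hp1 2)).neg
    norm_num [pow_succ] at this
    simpa using this
  have hanti : Antitone fun n ↦ besselJnCoeff p (n + 1) := by
    refine antitone_nat_of_succ_le fun n ↦ ?_
    rw [besselJnCoeff_succ_right p (n + 1)]
    refine div_le_self (besselJnCoeff_pos hp1 _).le ?_
    push_cast
    nlinarith
  have hp : 0 < p + 1 := by linarith
  have hp' : 0 < p + 2 := by linarith
  have hc : besselJnCoeff p 1 - besselJnCoeff p 2 = (2 * p + 3) / (2 * (p + 1) * (p + 2)) := by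
    rw [besselJnCoeff_one, besselJnCoeff_two]
    field_simp
    ring
  have h := hs.sub_le_of_antitone_alternating hanti
  rw [zero_add, hc] at h
  have : 1 - (2 * p + 3) / (2 * (p + 1) * (p + 2)) < 0 := by
    rw [sub_neg, one_lt_div (by positivity)]
    nlinarith
  linarith

theorem exists_mem_Ioo_zero_two_besselJ_eq_zero {p : ℝ} (hp1 : -1 < p) (hp2 : p ≤ -1/2) :
    ∃ c ∈ Ioo (0 : ℝ) 2, besselJ p c = 0 := by
  obtain ⟨c, hc, hJc⟩ := intermediate_value_Ioo' zero_le_two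
    (continuous_besselJn hp1).continuousOn
    ⟨besselJn_two_neg hp1 hp2, by rw [besselJn_zero hp1]; exact one_pos⟩
  exact ⟨c, hc, by rw [besselJ_eq_mul_besselJn hp1 hc.1, hJc, mul_zero]⟩

/-- In the difference of the two sides of the frame inequality, the coefficient of `(-y)ⁿ` is
`-(n-2)(n-p-3) / (2(p+3)(p+n+1)) · c_n`; this is its `n = m + 3` term, up to the sign `(-1)ᵐ`. -/
noncomputable def besselFrameTerm (p y : ℝ) (m : ℕ) : ℝ :=
  (m + 1) * (m - p) / (2 * (p + 3) * (p + m + 4)) * besselJnCoeff p (m + 3) * y ^ (m + 3)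

theorem neg_one_pow_mul_besselFrameTerm {p : ℝ} (hp : -1 < p) (x : ℝ) (m : ℕ) :
    (-1) ^ m * besselFrameTerm p (x ^ 2 / 4) m =
      (-1) ^ (m + 3) * (besselJnCoeff p (m + 3) * (x ^ 2 / 4) ^ (m + 3))
        - (p + 2) / (p + 1) *
          ((-1) ^ (m + 3) * (besselJnCoeff (p + 1) (m + 3) * (x ^ 2 / 4) ^ (m + 3)))
        + 1 / (8 * (p + 1) * (p + 3)) * x ^ 2 *
          ((-1) ^ (m + 2) * (besselJnCoeff (p + 1) (m + 2) * (x ^ 2 / 4) ^ (m + 2))) := by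
  have h1 : p + 1 ≠ 0 := by linarith
  have h3 : p + 3 ≠ 0 := by linarith
  have h4 : p + m + 4 ≠ 0 := by have := m.cast_nonneg (α := ℝ); linarith
  have hm : (m : ℝ) + 3 ≠ 0 := by positivity
  rw [besselFrameTerm, show m + 3 = m + 2 + 1 from rfl, besselJnCoeff_succ_left p (m + 2),
    besselJnCoeff_succ_right (p + 1) (m + 2)]
  push_cast
  rw [show p + 1 + (m + 2 : ℝ) + 1 = p + m + 4 by ring, show (m : ℝ) + 2 + 1 = m + 3 by ring]
  field_simp
  ring

theorem hasSum_besselFrameTerm {p : ℝ} (hp : -1 < p) (x : ℝ) :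
    HasSum (fun m ↦ (-1) ^ m * besselFrameTerm p (x ^ 2 / 4) m)
      (1 / (p + 1) + besselJn p x - 1 / (8 * (p + 1) * (p + 3)) * x ^ 2
        - ((p + 2) / (p + 1) - 1 / (8 * (p + 1) * (p + 3)) * x ^ 2) * besselJn (p + 1) x) := by
  have hp' : -1 < p + 1 := by linarith
  have hA := (hasSum_nat_add_iff' 3).2 (hasSum_besselJn hp x)
  have hB₃ := (hasSum_nat_add_iff' 3).2 (hasSum_besselJn hp' x)
  have hB₂ := (hasSum_nat_add_iff' 2).2 (hasSum_besselJn hp' x)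
  have h1 : p + 1 ≠ 0 := by linarith
  have h2 : p + 2 ≠ 0 := by linarith
  have h3 : p + 3 ≠ 0 := by linarith
  have h := (hA.sub (hB₃.mul_left ((p + 2) / (p + 1)))).add
    (hB₂.mul_left (1 / (8 * (p + 1) * (p + 3)) * x ^ 2))
  simp only [Finset.sum_range_succ, Finset.sum_range_zero, besselJnCoeff_zero,
    besselJnCoeff_one, besselJnCoeff_two] at h
  simp only [neg_one_pow_mul_besselFrameTerm hp]
  refine (congrArg (HasSum _) ?_).mpr h
  rw [show p + 1 + 1 = p + 2 by ring, show p + 1 + 2 = p + 3 by ring]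
  field_simp
  ring

theorem besselFrameTerm_pos {p : ℝ} (hp1 : -1 < p) (hp2 : p < 0) {y : ℝ} (hy : 0 < y) (m : ℕ) :
    0 < besselFrameTerm p y m := by
  have hm := m.cast_nonneg (α := ℝ)
  have : 0 < (m : ℝ) - p := by linarith
  have : 0 < p + m + 4 := by linarith
  have : 0 < p + 3 := by linarith
  have := besselJnCoeff_pos hp1 (m + 3)
  unfold besselFrameTerm
  positivity

theorem besselFrameTerm_succ {p : ℝ} (hp1 : -1 < p) (hp2 : p < 0) (y : ℝ) (m : ℕ) :
    besselFrameTerm p y (m + 1) = besselFrameTerm p y m *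
      ((m + 2) * ((m : ℝ) + 1 - p) * y / ((m + 1) * (m - p) * ((p + m + 5) * (m + 4)))) := by
  have hm := m.cast_nonneg (α := ℝ)
  have h3 : p + 3 ≠ 0 := by linarith
  have h4 : p + m + 4 ≠ 0 := by linarith
  have h5 : p + m + 5 ≠ 0 := by linarith
  have hm1 : (m : ℝ) + 1 ≠ 0 := by positivity
  have hmp : (m : ℝ) - p ≠ 0 := by linarith
  have hm4 : (m : ℝ) + 4 ≠ 0 := by positivity
  rw [besselFrameTerm, besselFrameTerm, show m + 1 + 3 = m + 3 + 1 from rfl,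
    besselJnCoeff_succ_right p (m + 3)]
  push_cast
  rw [show p + (m + 3 : ℝ) + 1 = p + m + 4 by ring, show (m : ℝ) + 3 + 1 = m + 4 by ring,
    show p + (m + 1 : ℝ) + 4 = p + m + 5 by ring]
  field_simp
  ring

theorem besselFrameTerm_succ_lt {p : ℝ} (hp1 : -1 < p) (hp2 : p ≤ -1/2) {y : ℝ} (hy0 : 0 < y)
    (hy1 : y ≤ 1) (m : ℕ) : besselFrameTerm p y (m + 1) < besselFrameTerm p y m := by
  have hm := m.cast_nonneg (α := ℝ)
  have h0 : 0 < (m + 1) * ((m : ℝ) - p) := by nlinarith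
  have h1 : 0 < (m + 2) * ((m : ℝ) + 1 - p) := by nlinarith
  have key : (m + 2) * ((m : ℝ) + 1 - p) * y < (m + 1) * (m - p) * ((p + m + 5) * (m + 4)) :=
    calc (m + 2) * ((m : ℝ) + 1 - p) * y ≤ (m + 2) * ((m : ℝ) + 1 - p) :=
          mul_le_of_le_one_right h1.le hy1
      _ ≤ (2 * (m + 1)) * (3 * (m - p)) := by gcongr <;> linarith
      _ = 6 * ((m + 1) * (m - p)) := by ring
      _ < 16 * ((m + 1) * (m - p)) := by linarith
      _ ≤ (m + 1) * (m - p) * ((p + m + 5) * (m + 4)) := by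
          rw [mul_comm]; gcongr; nlinarith
  rw [besselFrameTerm_succ hp1 (by linarith)]
  exact mul_lt_of_lt_one_right (besselFrameTerm_pos hp1 (by linarith) hy0 m)
    ((div_lt_one (mul_pos h0 (mul_pos (by linarith) (by positivity)))).2 key)

theorem bessel_frame_lower (p : ℝ) (hp1 : -1 < p) (hp2 : p ≤ -1/2) (jp1 : ℝ)
    (hj : IsLeast {x : ℝ | 0 < x ∧ besselJ p x = 0} jp1)
    (x : ℝ) (hx0 : 0 < x) (hx : x < jp1) :
    ((p+2)/(p+1) - (1/(8*(p+1)*(p+3))) * x^2) * besselJn (p+1) x <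
      1/(p+1) + besselJn p x - (1/(8*(p+1)*(p+3))) * x^2 := by
  obtain ⟨c, ⟨hc0, hc2⟩, hJc⟩ := exists_mem_Ioo_zero_two_besselJ_eq_zero hp1 hp2
  have hx2 : x < 2 := hx.trans_le ((hj.2 ⟨hc0, hJc⟩).trans hc2.le)
  have hy0 : 0 < x ^ 2 / 4 := by positivity
  have hy1 : x ^ 2 / 4 ≤ 1 := by nlinarith
  have hanti : StrictAnti (besselFrameTerm p (x ^ 2 / 4)) :=
    strictAnti_nat_of_succ_lt (besselFrameTerm_succ_lt hp1 hp2 hy0 hy1)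
  have hlower := (hasSum_besselFrameTerm hp1 x).sub_le_of_antitone_alternating hanti.antitone
  have hpos := sub_pos.2 (hanti zero_lt_one)
  linarith
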